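/- If (w, c, α²) is a non-trivial solution of the Taylor–Goldstein eigenvalue problem with c_i > 0, then the imaginary-part integral relation ∫_{z₁}^{z₂} U″/((U − c_r)² + c_i²) |w|² dz − 2 ∫_{z₁}^{z₂} gβ(U − c_r)/((U − c_r)² + c_i²)² |w|² dz = 0 holds (Lemma 3.1, relation (3.2)). -/

import Mathlib

/-!
Multiplying the Taylor–Goldstein equation by `conj w` gives
`conj w * w'' = (α² + U''/(U - c) - gβ/(U - c)²) |w|²`, whose imaginary part is
`c_i (U''/|U - c|² - 2gβ(U - c_r)/|U - c|⁴) |w|²`. Since `conj w' * w'` is real, this is also the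
derivative of `Im (conj w * w')`, which vanishes at both ends by the boundary conditions; integrating
and dividing by `c_i ≠ 0` gives the relation.
-/

open Set ComplexConjugate intervalIntegral

namespace Complex

lemma normSq_ofReal_sub (u : ℝ) (c : ℂ) : normSq (u - c) = (u - c.re) ^ 2 + c.im ^ 2 := by
  simp only [normSq_apply, sub_re, sub_im, ofReal_re, ofReal_im]
  ring

lemma im_inv_ofReal_sub (u : ℝ) (c : ℂ) :
    ((u : ℂ) - c)⁻¹.im = c.im / ((u - c.re) ^ 2 + c.im ^ 2) := by
  rw [inv_im, normSq_ofReal_sub]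
  simp

lemma im_inv_sq_ofReal_sub (u : ℝ) (c : ℂ) :
    (((u : ℂ) - c) ^ 2)⁻¹.im = 2 * (u - c.re) * c.im / ((u - c.re) ^ 2 + c.im ^ 2) ^ 2 := by
  rw [inv_im, map_pow, normSq_ofReal_sub]
  simp only [pow_two, mul_im, sub_re, sub_im, ofReal_re, ofReal_im]
  ring

end Complex

open Complex

lemma im_conj_mul_eq_of_taylorGoldstein {a p q u : ℝ} {c w w'' : ℂ}
    (h : w'' - (a : ℂ) ^ 2 * w - (p / ((u : ℂ) - c)) * w + (q / ((u : ℂ) - c) ^ 2) * w = 0) :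
    (conj w * w'').im = c.im * (p / ((u - c.re) ^ 2 + c.im ^ 2) * ‖w‖ ^ 2
      - 2 * (q * (u - c.re) / ((u - c.re) ^ 2 + c.im ^ 2) ^ 2 * ‖w‖ ^ 2)) := by
  have hw'' : w'' = ((a : ℂ) ^ 2 + p * ((u : ℂ) - c)⁻¹ - q * (((u : ℂ) - c) ^ 2)⁻¹) * w := by
    linear_combination h
  have hnorm : conj w * w = ((‖w‖ ^ 2 : ℝ) : ℂ) := by
    rw [conj_mul']
    push_cast
    rfl
  rw [hw'', mul_left_comm, hnorm, im_mul_ofReal, sub_im, add_im, im_ofReal_mul, im_ofReal_mul,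
    im_inv_ofReal_sub, im_inv_sq_ofReal_sub, ← ofReal_pow, ofReal_im]
  ring

lemma hasDerivAt_im_conj_mul {w w' : ℝ → ℂ} {w'' : ℂ} {z : ℝ}
    (hw : HasDerivAt w (w' z) z) (hw' : HasDerivAt w' w'' z) :
    HasDerivAt (fun x => (conj (w x) * w' x).im) (conj (w z) * w'').im z := by
  have hreal : (conj (w' z) * w' z).im = 0 := by
    rw [conj_mul']
    norm_cast
  refine (imCLM.hasFDerivAt.comp_hasDerivAt z (hw.star.mul hw')).congr_deriv ?_
  simp only [imCLM_apply, add_im, star_def, hreal, zero_add]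

theorem taylor_goldstein_imaginary_part_relation_general
    (z₁ z₂ : ℝ) (hz : z₁ < z₂)
    (g : ℝ)
    (U U' U'' : ℝ → ℝ)
    (hU : ∀ z ∈ Icc z₁ z₂, HasDerivAt U (U' z) z)
    (hU'' : ContinuousOn U'' (Icc z₁ z₂))
    (β : ℝ → ℝ) (hβc : ContinuousOn β (Icc z₁ z₂))
    (α : ℝ)
    (c : ℂ) (hci : 0 < c.im)
    (w w' w'' : ℝ → ℂ)
    (hw : ∀ z ∈ Icc z₁ z₂, HasDerivAt w (w' z) z)
    (hw' : ∀ z ∈ Icc z₁ z₂, HasDerivAt w' (w'' z) z)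
    (hbc₁ : w z₁ = 0) (hbc₂ : w z₂ = 0)
    (heq : ∀ z ∈ Icc z₁ z₂,
      w'' z - (α : ℂ) ^ 2 * w z - ((U'' z : ℂ) / ((U z : ℂ) - c)) * w z
        + ((g : ℂ) * (β z : ℂ) / ((U z : ℂ) - c) ^ 2) * w z = 0) :
    (∫ z in z₁..z₂, U'' z / ((U z - c.re) ^ 2 + c.im ^ 2) * ‖w z‖ ^ 2)
      - 2 * (∫ z in z₁..z₂,
          g * β z * (U z - c.re) / ((U z - c.re) ^ 2 + c.im ^ 2) ^ 2 * ‖w z‖ ^ 2)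
      = 0 := by
  have hI : uIcc z₁ z₂ = Icc z₁ z₂ := uIcc_of_le hz.le
  have hD : ∀ z, (U z - c.re) ^ 2 + c.im ^ 2 ≠ 0 := fun z => by positivity
  have hUc : ContinuousOn U (Icc z₁ z₂) := fun z hz => (hU z hz).continuousAt.continuousWithinAt
  have hwc : ContinuousOn w (Icc z₁ z₂) := fun z hz => (hw z hz).continuousAt.continuousWithinAt
  have h₁ : IntervalIntegrable (fun z => U'' z / ((U z - c.re) ^ 2 + c.im ^ 2) * ‖w z‖ ^ 2)
      MeasureTheory.volume z₁ z₂ := by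
    refine ContinuousOn.intervalIntegrable ?_
    rw [hI]
    exact (hU''.div (by fun_prop) fun z _ => hD z).mul (by fun_prop)
  have h₂ : IntervalIntegrable
      (fun z => g * β z * (U z - c.re) / ((U z - c.re) ^ 2 + c.im ^ 2) ^ 2 * ‖w z‖ ^ 2)
      MeasureTheory.volume z₁ z₂ := by
    refine ContinuousOn.intervalIntegrable ?_
    rw [hI]
    exact (ContinuousOn.div (by fun_prop) (by fun_prop) fun z _ => pow_ne_zero 2 (hD z)).mul
      (by fun_prop)
  have hFTC := integral_eq_sub_of_hasDerivAt (f := fun z => (conj (w z) * w' z).im)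
    (fun z hz => by
      rw [hI] at hz
      exact (hasDerivAt_im_conj_mul (hw z hz) (hw' z hz)).congr_deriv
        (im_conj_mul_eq_of_taylorGoldstein (q := g * β z) (by push_cast; exact heq z hz)))
    ((h₁.sub (h₂.const_mul 2)).const_mul c.im)
  rw [integral_const_mul, integral_sub h₁ (h₂.const_mul 2), integral_const_mul] at hFTC
  simp only [hbc₁, hbc₂, map_zero, zero_mul, zero_im, sub_self] at hFTC
  exact (mul_eq_zero.mp hFTC).resolve_left hci.ne'

/-- Lemma 3.1, relation (3.2): the imaginary part of the first integral identity for the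
Taylor–Goldstein eigenvalue problem. -/
theorem taylor_goldstein_imaginary_part_relation
    (z₁ z₂ : ℝ) (hz : z₁ < z₂)
    (g : ℝ) (hg : 0 < g)
    (U U' U'' : ℝ → ℝ)
    (hU : ∀ z ∈ Icc z₁ z₂, HasDerivAt U (U' z) z)
    (hU' : ∀ z ∈ Icc z₁ z₂, HasDerivAt U' (U'' z) z)
    (hU'' : ContinuousOn U'' (Icc z₁ z₂))
    (β : ℝ → ℝ) (hβc : ContinuousOn β (Icc z₁ z₂))
    (hβ : ∀ z ∈ Icc z₁ z₂, 0 ≤ β z)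
    (α : ℝ) (hα : 0 < α)
    (c : ℂ) (hci : 0 < c.im)
    (w w' w'' : ℝ → ℂ)
    (hw : ∀ z ∈ Icc z₁ z₂, HasDerivAt w (w' z) z)
    (hw' : ∀ z ∈ Icc z₁ z₂, HasDerivAt w' (w'' z) z)
    (hw'' : ContinuousOn w'' (Icc z₁ z₂))
    (hw0 : ∃ z ∈ Icc z₁ z₂, w z ≠ 0)
    (hbc₁ : w z₁ = 0) (hbc₂ : w z₂ = 0)
    (heq : ∀ z ∈ Icc z₁ z₂,
      w'' z - (α : ℂ) ^ 2 * w z - ((U'' z : ℂ) / ((U z : ℂ) - c)) * w z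
        + ((g : ℂ) * (β z : ℂ) / ((U z : ℂ) - c) ^ 2) * w z = 0) :
    (∫ z in z₁..z₂, U'' z / ((U z - c.re) ^ 2 + c.im ^ 2) * ‖w z‖ ^ 2)
      - 2 * (∫ z in z₁..z₂,
          g * β z * (U z - c.re) / ((U z - c.re) ^ 2 + c.im ^ 2) ^ 2 * ‖w z‖ ^ 2)
      = 0 :=
  taylor_goldstein_imaginary_part_relation_general z₁ z₂ hz g U U' U'' hU hU'' β hβc α c hci w w'
    w'' hw hw' hbc₁ hbc₂ heq
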